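/- arXiv:0811.0027 — 3 statements merged into one kernel-verified Lean document; each statement's English description precedes it below -/
import Mathlib

section
/- Let $x_n \geq 0$ with $\sum_{n=0}^\infty x_n \leq C$, and $f(c) = \sum_{n=0}^\infty c^n x_n$. Then the lower bound $l_1(\Delta) = \big(f(\Delta) - f(0)(1-\Delta^2) - \Delta^2 C\big)/(\Delta - \Delta^2)$ converges to $x_1$ as $\Delta \to 0^+$. -/
theorem l1_tendsto_x1 (C : ℝ) (x : ℕ → ℝ) (hx : ∀ n, 0 ≤ x n)
    (hsum : Summable x) (hC : ∑' n, x n ≤ C)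
    (f : ℝ → ℝ) (hf : ∀ c ∈ Set.Icc (0:ℝ) 1, f c = ∑' n, c ^ n * x n) :
    Filter.Tendsto
      (fun Δ : ℝ => (f Δ - f 0 * (1 - Δ ^ 2) - Δ ^ 2 * C) / (Δ - Δ ^ 2))
      (nhdsWithin 0 (Set.Ioi 0)) (nhds (x 1)) := by
  set T : ℝ := ∑' n, x (n + 2) with hT
  have hsum2 : Summable (fun n => x (n + 2)) := (summable_nat_add_iff 2).mpr hsum
  have hIoo : Set.Ioo (0:ℝ) 1 ∈ nhdsWithin (0:ℝ) (Set.Ioi 0) :=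
    Ioo_mem_nhdsGT_of_mem ⟨le_refl 0, zero_lt_one⟩
  -- the simplified function
  set g : ℝ → ℝ := fun Δ =>
    (x 1 + (∑' n, Δ ^ (n + 1) * x (n + 2)) + Δ * (x 0 - C)) / (1 - Δ) with hg
  have hsummΔ : ∀ Δ ∈ Set.Icc (0:ℝ) 1, Summable (fun n => Δ ^ n * x n) := by
    intro Δ hΔ
    refine hsum.of_nonneg_of_le (fun n => mul_nonneg (pow_nonneg hΔ.1 n) (hx n)) (fun n => ?_)
    have := pow_le_one₀ hΔ.1 hΔ.2 (n := n)
    nlinarith [hx n]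
  have hf0 : f 0 = x 0 := by
    rw [hf 0 ⟨le_refl 0, zero_le_one⟩]
    rw [tsum_eq_single 0 (fun b hb => by simp [zero_pow hb])]
    simp
  have key : ∀ Δ ∈ Set.Ioo (0:ℝ) 1,
      (f Δ - f 0 * (1 - Δ ^ 2) - Δ ^ 2 * C) / (Δ - Δ ^ 2) = g Δ := by
    intro Δ hΔ
    have hΔ0 : (0:ℝ) < Δ := hΔ.1
    have hΔ1 : Δ < 1 := hΔ.2
    have hmem : Δ ∈ Set.Icc (0:ℝ) 1 := ⟨hΔ0.le, hΔ1.le⟩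
    have hs0 : Summable (fun n => Δ ^ n * x n) := hsummΔ Δ hmem
    have hs1 : Summable (fun n => Δ ^ (n + 1) * x (n + 1)) :=
      (summable_nat_add_iff 1).mpr hs0
    have hfΔ : f Δ = x 0 + Δ * x 1 + Δ * ∑' n, Δ ^ (n + 1) * x (n + 2) := by
      rw [hf Δ hmem, Summable.tsum_eq_zero_add hs0, Summable.tsum_eq_zero_add hs1]
      have : ∑' n, Δ ^ (n + 1 + 1) * x (n + 1 + 1)
          = Δ * ∑' n, Δ ^ (n + 1) * x (n + 2) := by
        rw [← tsum_mul_left]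
        exact tsum_congr fun n => by ring_nf
      rw [this]; ring
    rw [hfΔ, hf0, hg]
    have h1 : Δ - Δ ^ 2 ≠ 0 := by nlinarith
    have h2 : (1:ℝ) - Δ ≠ 0 := by nlinarith
    field_simp
    ring
  have hcongr : (fun Δ : ℝ => (f Δ - f 0 * (1 - Δ ^ 2) - Δ ^ 2 * C) / (Δ - Δ ^ 2))
      =ᶠ[nhdsWithin 0 (Set.Ioi 0)] g :=
    Filter.eventuallyEq_of_mem hIoo key
  rw [Filter.tendsto_congr' hcongr]
  -- R tends to 0
  have hR : Filter.Tendsto (fun Δ : ℝ => ∑' n, Δ ^ (n + 1) * x (n + 2))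
      (nhdsWithin 0 (Set.Ioi 0)) (nhds 0) := by
    have hbound : ∀ᶠ Δ in nhdsWithin (0:ℝ) (Set.Ioi 0),
        |∑' n, Δ ^ (n + 1) * x (n + 2)| ≤ Δ * T := by
      filter_upwards [hIoo] with Δ hΔ
      have hΔ0 : (0:ℝ) ≤ Δ := hΔ.1.le
      have hΔ1 : Δ ≤ 1 := hΔ.2.le
      have hsR : Summable (fun n => Δ ^ (n + 1) * x (n + 2)) := by
        refine hsum2.of_nonneg_of_le
          (fun n => mul_nonneg (pow_nonneg hΔ0 _) (hx _)) (fun n => ?_)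
        have := pow_le_one₀ hΔ0 hΔ1 (n := n + 1)
        nlinarith [hx (n + 2)]
      have hnn : 0 ≤ ∑' n, Δ ^ (n + 1) * x (n + 2) :=
        tsum_nonneg fun n => mul_nonneg (pow_nonneg hΔ0 _) (hx _)
      rw [abs_of_nonneg hnn]
      calc ∑' n, Δ ^ (n + 1) * x (n + 2) ≤ ∑' n, Δ * x (n + 2) := by
            refine Summable.tsum_le_tsum (fun n => ?_) hsR (hsum2.mul_left Δ)
            have hp : Δ ^ (n + 1) ≤ Δ ^ 1 := pow_le_pow_of_le_one hΔ0 hΔ1 (by omega)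
            simpa using mul_le_mul_of_nonneg_right (by simpa using hp) (hx (n + 2))
        _ = Δ * T := tsum_mul_left
    have hΔT : Filter.Tendsto (fun Δ : ℝ => Δ * T) (nhdsWithin 0 (Set.Ioi 0)) (nhds 0) := by
      have : Filter.Tendsto (fun Δ : ℝ => Δ * T) (nhds 0) (nhds (0 * T)) :=
        (continuous_id.mul continuous_const).tendsto 0
      simpa using this.mono_left nhdsWithin_le_nhds
    exact squeeze_zero_norm' hbound hΔT
  have hlin : Filter.Tendsto (fun Δ : ℝ => Δ * (x 0 - C))
      (nhdsWithin 0 (Set.Ioi 0)) (nhds 0) := by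
    have : Filter.Tendsto (fun Δ : ℝ => Δ * (x 0 - C)) (nhds 0) (nhds (0 * (x 0 - C))) :=
      (continuous_id.mul continuous_const).tendsto 0
    simpa using this.mono_left nhdsWithin_le_nhds
  have hden : Filter.Tendsto (fun Δ : ℝ => 1 - Δ) (nhdsWithin (0:ℝ) (Set.Ioi 0))
      (nhds 1) := by
    have : Filter.Tendsto (fun Δ : ℝ => 1 - Δ) (nhds 0) (nhds (1 - 0)) :=
      (continuous_const.sub continuous_id).tendsto 0
    simpa using this.mono_left nhdsWithin_le_nhds
  have hnum : Filter.Tendsto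
      (fun Δ : ℝ => x 1 + (∑' n, Δ ^ (n + 1) * x (n + 2)) + Δ * (x 0 - C))
      (nhdsWithin 0 (Set.Ioi 0)) (nhds (x 1)) := by
    have := ((tendsto_const_nhds (x := x 1)).add hR).add hlin
    simpa using this
  have := hnum.div hden one_ne_zero
  rw [div_one] at this
  exact this
end

section
/- Let $x_n \geq 0$ with $\sum_{n=0}^\infty x_n \leq C$, and $f(c) = \sum_{n=0}^\infty c^n x_n$. Define $u_1(c) = (f(c)-f(0))/c$ and $l_2(c_1,c_2) = \big(f(c_2) - f(0)(1-c_2^3) - u_1(c_1)(c_2-c_2^3) - c_2^3 C\big)/(c_2^2 - c_2^3)$. Then $l_2(\Delta, \sqrt{\Delta}) \to x_2$ as $\Delta \to 0^+$. -/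
open Filter

private lemma expand_aux (x : ℕ → ℝ) (hx : ∀ n, 0 ≤ x n) (hsum : Summable x) (C : ℝ)
    (hC : ∑' n, x n ≤ C) (c : ℝ) (hc0 : 0 ≤ c) (hc1 : c ≤ 1) (k : ℕ) :
    ∃ r, 0 ≤ r ∧ r ≤ C ∧
      ∑' n, c ^ n * x n = (∑ i ∈ Finset.range k, c ^ i * x i) + c ^ k * r := by
  have hle : ∀ n, c ^ n * x n ≤ x n := by
    intro n
    calc c ^ n * x n ≤ 1 * x n := by
          apply mul_le_mul_of_nonneg_right (pow_le_one₀ hc0 hc1) (hx n)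
      _ = x n := one_mul _
  have hnn : ∀ n, 0 ≤ c ^ n * x n := fun n => mul_nonneg (pow_nonneg hc0 n) (hx n)
  have hs : Summable (fun n => c ^ n * x n) := by
    exact Summable.of_nonneg_of_le hnn hle hsum
  have hstail : Summable (fun n => c ^ (n + k) * x (n + k)) :=
    (summable_nat_add_iff k).2 hs
  have hxtail : Summable (fun n => x (n + k)) := (summable_nat_add_iff k).2 hsum
  refine ⟨∑' n, c ^ n * x (n + k), tsum_nonneg (fun n => mul_nonneg (pow_nonneg hc0 n) (hx _)),
    ?_, ?_⟩
  · have h1 : ∑' n, c ^ n * x (n + k) ≤ ∑' n, x (n + k) := by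
      apply Summable.tsum_le_tsum _ _ hxtail
      · intro n
        calc c ^ n * x (n + k) ≤ 1 * x (n + k) := by
              apply mul_le_mul_of_nonneg_right (pow_le_one₀ hc0 hc1) (hx _)
          _ = x (n + k) := one_mul _
      · exact Summable.of_nonneg_of_le (fun n => mul_nonneg (pow_nonneg hc0 n) (hx _))
          (fun n => by
            calc c ^ n * x (n + k) ≤ 1 * x (n + k) := by
                  apply mul_le_mul_of_nonneg_right (pow_le_one₀ hc0 hc1) (hx _)
              _ = x (n + k) := one_mul _) hxtail
    have h2 : ∑' n, x (n + k) ≤ ∑' n, x n := by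
      have := Summable.sum_add_tsum_nat_add k hsum
      have hpos : 0 ≤ ∑ i ∈ Finset.range k, x i :=
        Finset.sum_nonneg fun i _ => hx i
      linarith
    linarith
  · have h3 := Summable.sum_add_tsum_nat_add k hs
    have h4 : ∑' n, c ^ (n + k) * x (n + k) = c ^ k * ∑' n, c ^ n * x (n + k) := by
      rw [← tsum_mul_left]
      apply tsum_congr
      intro n
      rw [pow_add]
      ring
    rw [← h3, h4]

theorem l2_tendsto_x2 (C : ℝ) (x : ℕ → ℝ) (hx : ∀ n, 0 ≤ x n)
    (hsum : Summable x) (hC : ∑' n, x n ≤ C)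
    (f : ℝ → ℝ) (hf : ∀ c ∈ Set.Icc (0:ℝ) 1, f c = ∑' n, c ^ n * x n)
    (u₁ : ℝ → ℝ) (hu₁ : ∀ c, u₁ c = (f c - f 0) / c)
    (l₂ : ℝ → ℝ → ℝ)
    (hl₂ : ∀ c₁ c₂, l₂ c₁ c₂ =
      (f c₂ - f 0 * (1 - c₂ ^ 3) - u₁ c₁ * (c₂ - c₂ ^ 3) - c₂ ^ 3 * C) /
        (c₂ ^ 2 - c₂ ^ 3)) :
    Filter.Tendsto (fun Δ : ℝ => l₂ Δ (Real.sqrt Δ))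
      (nhdsWithin 0 (Set.Ioi 0)) (nhds (x 2)) := by
  have hC0 : 0 ≤ C := le_trans (tsum_nonneg hx) hC
  have hsum3 : x 0 + x 1 + x 2 ≤ C := by
    have h := Summable.sum_le_tsum (Finset.range 3) (fun i _ => hx i) hsum
    simp [Finset.sum_range_succ] at h
    linarith
  have hf0 : f 0 = x 0 := by
    rw [hf 0 ⟨le_refl 0, zero_le_one⟩]
    rw [tsum_eq_single 0 (fun n hn => by simp [zero_pow hn])]
    simp
  rw [tendsto_iff_dist_tendsto_zero]
  have htend : Filter.Tendsto (fun Δ : ℝ => 4 * C * Real.sqrt Δ)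
      (nhdsWithin 0 (Set.Ioi 0)) (nhds 0) := by
    have h2 : Filter.Tendsto (fun Δ : ℝ => 4 * C * Real.sqrt Δ) (nhds 0)
        (nhds (4 * C * Real.sqrt 0)) := (Real.continuous_sqrt.tendsto 0).const_mul (4 * C)
    simp only [Real.sqrt_zero, mul_zero] at h2
    exact h2.mono_left nhdsWithin_le_nhds
  refine squeeze_zero' (Filter.Eventually.of_forall fun Δ => dist_nonneg) ?_ htend
  · filter_upwards [Ioo_mem_nhdsGT (by norm_num : (0:ℝ) < 1/4)]
      with Δ hΔ
    obtain ⟨hΔ0, hΔ14⟩ := hΔ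
    set s := Real.sqrt Δ with hs_def
    have hs0 : 0 < s := Real.sqrt_pos.2 hΔ0
    have hss : s ^ 2 = Δ := Real.sq_sqrt hΔ0.le
    have hs12 : s < 1/2 := by
      rw [hs_def, Real.sqrt_lt' (by norm_num : (0:ℝ) < 1/2)]
      linarith
    have hs1 : s < 1 := by linarith
    -- expansion of f s to order 3
    obtain ⟨rE, hrE0, hrEC, hrE⟩ := expand_aux x hx hsum C hC s hs0.le hs1.le 3
    obtain ⟨rD, hrD0, hrDC, hrD⟩ := expand_aux x hx hsum C hC Δ hΔ0.le (by linarith) 2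
    have hfs : f s = x 0 + s * x 1 + s ^ 2 * x 2 + s ^ 3 * rE := by
      rw [hf s ⟨hs0.le, hs1.le⟩, hrE]
      simp [Finset.sum_range_succ]
    have hfΔ : f Δ = x 0 + Δ * x 1 + Δ ^ 2 * rD := by
      rw [hf Δ ⟨hΔ0.le, by linarith⟩, hrD]
      simp [Finset.sum_range_succ]
    have hu : u₁ Δ = x 1 + Δ * rD := by
      rw [hu₁, hfΔ, hf0]
      field_simp
      ring
    have hd : 0 < s ^ 2 - s ^ 3 := by nlinarith
    have hkey : l₂ Δ s - x 2 =
        (s ^ 3 * (rE + x 0 + x 1 + x 2 - C - rD * (1 - s ^ 2))) / (s ^ 2 - s ^ 3) := by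
      rw [hl₂, hfs, hf0, hu, ← hss]
      field_simp [hs0.ne', (sub_pos.2 hs1).ne', hd.ne']
      ring
    rw [Real.dist_eq, hkey, abs_div, abs_of_pos hd, div_le_iff₀ hd]
    have habs : |s ^ 3 * (rE + x 0 + x 1 + x 2 - C - rD * (1 - s ^ 2))| ≤ s ^ 3 * (2 * C) := by
      rw [abs_mul, abs_of_pos (by positivity : (0:ℝ) < s ^ 3)]
      apply mul_le_mul_of_nonneg_left _ (by positivity)
      rw [abs_le]
      constructor <;> nlinarith [hx 0, hx 1, hx 2]
    calc |s ^ 3 * (rE + x 0 + x 1 + x 2 - C - rD * (1 - s ^ 2))| ≤ s ^ 3 * (2 * C) := habs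
      _ ≤ 4 * C * s * (s ^ 2 - s ^ 3) := by nlinarith [mul_nonneg (mul_nonneg hC0 (pow_nonneg hs0.le 3)) (by linarith : (0:ℝ) ≤ 1 - 2 * s)]
end

section
/- Let $x_n \geq 0$ with $\sum_{n=0}^\infty x_n \leq C$, and $f(c) = \sum_{n=0}^\infty c^n x_n$. Define $l_1(c) = \big(f(c) - f(0)(1-c^2) - c^2 C\big)/(c - c^2)$ and $u_2(c_1,c_2) = \big(f(c_2) - f(0) - c_2\, l_1(c_1)\big)/c_2^2$. Then $u_2(\Delta, \sqrt{\Delta}) \to x_2$ as $\Delta \to 0^+$. -/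
lemma decomp_aux (x : ℕ → ℝ) (hx : ∀ n, 0 ≤ x n) (hsum : Summable x)
    (c : ℝ) (hc0 : 0 ≤ c) (hc1 : c ≤ 1) :
    ∃ r, (∑' n, c ^ n * x n) = x 0 + c * x 1 + c ^ 2 * x 2 + r ∧ 0 ≤ r ∧
      r ≤ c ^ 3 * ∑' n, x n := by
  have hnn : ∀ n, 0 ≤ c ^ n * x n := fun n => mul_nonneg (pow_nonneg hc0 n) (hx n)
  have hle : ∀ n, c ^ n * x n ≤ x n := fun n => by
    calc c ^ n * x n ≤ 1 * x n :=
          mul_le_mul_of_nonneg_right (pow_le_one₀ hc0 hc1) (hx n)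
    _ = x n := one_mul _
  have hsc : Summable (fun n => c ^ n * x n) := Summable.of_nonneg_of_le hnn hle hsum
  refine ⟨∑' n, c ^ (n + 3) * x (n + 3), ?_, ?_, ?_⟩
  · rw [← Summable.sum_add_tsum_nat_add 3 hsc]
    simp [Finset.sum_range_succ]
  · exact tsum_nonneg fun n => hnn (n + 3)
  · have h1 : ∀ n : ℕ, c ^ (n + 3) * x (n + 3) ≤ c ^ 3 * x (n + 3) := fun n =>
      mul_le_mul_of_nonneg_right
        (pow_le_pow_of_le_one hc0 hc1 (by omega)) (hx (n + 3))
    have hs3 : Summable (fun n => c ^ (n + 3) * x (n + 3)) :=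
      (summable_nat_add_iff 3).2 hsc
    have hs3' : Summable (fun n => c ^ 3 * x (n + 3)) :=
      ((summable_nat_add_iff 3).2 hsum).mul_left _
    calc (∑' n, c ^ (n + 3) * x (n + 3)) ≤ ∑' n, c ^ 3 * x (n + 3) :=
          Summable.tsum_le_tsum h1 hs3 hs3'
    _ = c ^ 3 * ∑' n, x (n + 3) := tsum_mul_left
    _ ≤ c ^ 3 * ∑' n, x n := by
        apply mul_le_mul_of_nonneg_left _ (pow_nonneg hc0 3)
        have := (Summable.sum_add_tsum_nat_add 3 hsum).symm
        have hpos : 0 ≤ ∑ i ∈ Finset.range 3, x i :=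
          Finset.sum_nonneg fun i _ => hx i
        linarith

set_option maxHeartbeats 1000000 in
theorem u2_tendsto_x2 (C : ℝ) (x : ℕ → ℝ) (hx : ∀ n, 0 ≤ x n)
    (hsum : Summable x) (hC : ∑' n, x n ≤ C)
    (f : ℝ → ℝ) (hf : ∀ c ∈ Set.Icc (0:ℝ) 1, f c = ∑' n, c ^ n * x n)
    (l₁ : ℝ → ℝ)
    (hl₁ : ∀ c, l₁ c = (f c - f 0 * (1 - c ^ 2) - c ^ 2 * C) / (c - c ^ 2))
    (u₂ : ℝ → ℝ → ℝ)
    (hu₂ : ∀ c₁ c₂, u₂ c₁ c₂ = (f c₂ - f 0 - c₂ * l₁ c₁) / c₂ ^ 2) :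
    Filter.Tendsto (fun Δ : ℝ => u₂ Δ (Real.sqrt Δ))
      (nhdsWithin 0 (Set.Ioi 0)) (nhds (x 2)) := by
  set S := ∑' n, x n with hS
  have hS0 : 0 ≤ S := tsum_nonneg hx
  have hf0 : f 0 = x 0 := by
    obtain ⟨r, he, h0, h1⟩ := decomp_aux x hx hsum 0 le_rfl zero_le_one
    rw [hf 0 ⟨le_rfl, zero_le_one⟩, he]
    have : r = 0 := le_antisymm (by simpa using h1) h0
    simp [this]
  set A := x 0 + x 1 + x 2 - C with hA
  set B := 3 * S + 2 * |A| with hB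
  rw [← tendsto_sub_nhds_zero_iff]
  apply squeeze_zero_norm' (a := fun Δ => Real.sqrt Δ * B)
  · filter_upwards [Ioo_mem_nhdsGT_of_mem
      (show (0:ℝ) ∈ Set.Ico 0 (1/2) from ⟨le_rfl, by norm_num⟩)] with Δ hΔ
    obtain ⟨hΔ0, hΔh⟩ := hΔ
    set s := Real.sqrt Δ with hs_def
    have hs0 : 0 < s := Real.sqrt_pos.2 hΔ0
    have hs2 : s ^ 2 = Δ := Real.sq_sqrt hΔ0.le
    have hs1 : s ≤ 1 := by nlinarith
    obtain ⟨r₁, e₁, hr₁0, hr₁⟩ := decomp_aux x hx hsum Δ hΔ0.le (by linarith)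
    obtain ⟨r₂, e₂, hr₂0, hr₂⟩ := decomp_aux x hx hsum s hs0.le hs1
    have hfΔ : f Δ = x 0 + Δ * x 1 + Δ ^ 2 * x 2 + r₁ :=
      (hf Δ ⟨hΔ0.le, by linarith⟩).trans e₁
    have hfs : f s = x 0 + s * x 1 + s ^ 2 * x 2 + r₂ :=
      (hf s ⟨hs0.le, hs1⟩).trans e₂
    have h1Δ : (0:ℝ) < 1 - Δ := by linarith
    have hD : (0:ℝ) < Δ * s * (1 - Δ) := by positivity
    have hden : Δ - Δ ^ 2 ≠ 0 := by nlinarith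
    have key : u₂ Δ s - x 2 =
        (r₂ * s * (1 - Δ) - (Δ ^ 2 * A + r₁)) / (Δ * s * (1 - Δ)) := by
      have hden' : s ^ 2 - (s ^ 2) ^ 2 ≠ 0 := by rw [hs2]; exact hden
      have h35 : s ^ 3 - s ^ 5 ≠ 0 := by nlinarith [pow_pos hs0 3, pow_pos hs0 5]
      have h1s : (1:ℝ) - s ^ 2 ≠ 0 := by rw [hs2]; linarith
      rw [hu₂, hl₁, hf0, hfΔ, hfs, hA]
      rw [show Δ = s ^ 2 from hs2.symm]
      field_simp [hs0.ne', hden', h35, h1s]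
      ring
    rw [Real.norm_eq_abs, key, abs_div, abs_of_pos hD, div_le_iff₀ hD]
    have hAbs1 : A ≤ |A| := le_abs_self A
    have hAbs2 : -|A| ≤ A := neg_abs_le A
    have ht0 : 0 ≤ |A| := abs_nonneg A
    have hEq : s * B * (Δ * s * (1 - Δ)) = Δ ^ 2 * (1 - Δ) * (3 * S + 2 * |A|) := by
      rw [hB, show Δ = s ^ 2 from hs2.symm]; ring
    rw [hEq]
    have p2 : r₂ * s * (1 - Δ) ≤ Δ ^ 2 * S := by
      have h1 : r₂ * s ≤ s ^ 3 * S * s := mul_le_mul_of_nonneg_right hr₂ hs0.le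
      have h2 : s ^ 3 * S * s = Δ ^ 2 * S := by rw [show Δ = s ^ 2 from hs2.symm]; ring
      have h3 : 0 ≤ r₂ * s := mul_nonneg hr₂0 hs0.le
      nlinarith [mul_nonneg h3 hΔ0.le]
    have p1 : 0 ≤ r₂ * s * (1 - Δ) := mul_nonneg (mul_nonneg hr₂0 hs0.le) h1Δ.le
    have p3 : Δ ^ 2 * A ≤ Δ ^ 2 * |A| := mul_le_mul_of_nonneg_left hAbs1 (sq_nonneg Δ)
    have p3' : -(Δ ^ 2 * |A|) ≤ Δ ^ 2 * A := by nlinarith [mul_le_mul_of_nonneg_left hAbs2 (sq_nonneg Δ)]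
    have p5 : r₁ ≤ Δ ^ 2 * (1 / 2) * S := by
      have : Δ ^ 3 * S ≤ Δ ^ 2 * (1 / 2) * S := by nlinarith [mul_nonneg (sq_nonneg Δ) hS0]
      linarith
    have p6 : Δ ^ 2 * (3 / 2 * S + |A|) ≤ Δ ^ 2 * (1 - Δ) * (3 * S + 2 * |A|) := by
      have h1 : 3 / 2 * S + |A| ≤ (1 - Δ) * (3 * S + 2 * |A|) := by nlinarith [mul_nonneg (show (0:ℝ) ≤ 1 / 2 - Δ by linarith) (show (0:ℝ) ≤ 3 * S + 2 * |A| by linarith)]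
      nlinarith [mul_le_mul_of_nonneg_left h1 (sq_nonneg Δ)]
    rw [abs_le]
    constructor <;> nlinarith [p1, p2, p3, p3', p5, p6]
  · have h0 : Filter.Tendsto Real.sqrt (nhdsWithin 0 (Set.Ioi 0)) (nhds 0) := by
      have := (Real.continuous_sqrt.continuousAt (x := 0)).continuousWithinAt
        (s := Set.Ioi (0:ℝ))
      simpa using this.tendsto
    simpa using h0.mul_const B
end
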